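/- Fix β > 0. There exists a function ρ₂ : (0, 1/2) → ℝ with ρ₂(δ)/δ^{1+2β} → 0 as δ → 0⁺ such that for every δ ∈ (0, 1/2) and every ξ ∈ ℝ with δ^{1+β}/(4π) < |ξ| < δ/(4π), one has |g_δ(ξ)| ≤ 1 − δ^{1+2β}/16 + ρ₂(δ). -/

import Mathlib

open MeasureTheory Real Set Filter

noncomputable section

/-- The centered Gaussian density `M_a(v) = e^{-v²/(2a)}/√(2πa)` with variance `a`. -/
def gaussM (a v : ℝ) : ℝ := Real.exp (-v ^ 2 / (2 * a)) / Real.sqrt (2 * π * a)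

/-- `f_δ = δ M_{1/(2δ)} + (1-δ) M_{1/(2(1-δ))}`. -/
def fdel (δ v : ℝ) : ℝ :=
  δ * gaussM (1 / (2 * δ)) v + (1 - δ) * gaussM (1 / (2 * (1 - δ))) v

/-- `h_δ(u) = f_δ(√u)/√u` (for `u > 0`). -/
def hdel (δ u : ℝ) : ℝ := fdel δ (Real.sqrt u) / Real.sqrt u

/-- `g_δ(ξ) = ∫_0^∞ h_δ(u) e^{-2πiξu} du`, the Fourier transform of `h_δ`. -/
def gdel (δ ξ : ℝ) : ℂ :=
  ∫ u in Ioi (0 : ℝ),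
    (hdel δ u : ℂ) * Complex.exp (-(2 : ℂ) * (π : ℂ) * Complex.I * (ξ : ℂ) * (u : ℂ))

/-!
Each Gaussian mode of `f_δ` turns `h_δ` into a multiple of `e^{-cu}/√u`, whose transform on the
half-line is, after `u = x²`, the complex Gaussian integral `(π/(c + 2πiξ))^{1/2}`. Hence
`‖g_δ(ξ)‖ ≤ δ (1 + t)^{-1/4} + (1 - δ)` with `t = (2πξ/δ)²`, and
`(1 + t)^{-1/4} ≤ 1 - t/4 + 3t²/16`. In the intermediate region `δ^{2β}/4 ≤ t ≤ 1/4`, where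
`t/4 - 3t²/16` is increasing, this gives the bound with `ρ₂(δ) = 3 δ^{1+4β}/256`.
-/

open Topology

lemma norm_cexp_neg_mul_div_sqrt (b : ℂ) {u : ℝ} (hu : 0 ≤ u) :
    ‖Complex.exp (-b * u) / (√u : ℝ)‖ = u ^ (-(1 / 2) : ℝ) * exp (-b.re * u ^ (1 : ℝ)) := by
  rw [norm_div, Complex.norm_exp, Complex.norm_real, norm_of_nonneg (sqrt_nonneg u), rpow_one,
    sqrt_eq_rpow, rpow_neg hu, div_eq_inv_mul]
  simp

lemma integrableOn_cexp_neg_mul_div_sqrt {b : ℂ} (hb : 0 < b.re) :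
    IntegrableOn (fun u : ℝ => Complex.exp (-b * u) / (√u : ℝ)) (Ioi 0) := by
  refine Integrable.mono'
    (integrableOn_rpow_mul_exp_neg_mul_rpow (s := -(1 / 2)) (by norm_num) one_pos hb)
    (Measurable.aestronglyMeasurable (by fun_prop)) ?_
  filter_upwards [ae_restrict_mem measurableSet_Ioi] with u hu
  exact (norm_cexp_neg_mul_div_sqrt b (le_of_lt hu)).le

lemma integral_cexp_neg_mul_div_sqrt {b : ℂ} (hb : 0 < b.re) :
    ∫ u in Ioi (0 : ℝ), Complex.exp (-b * u) / (√u : ℝ) = (π / b) ^ (1 / 2 : ℂ) := by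
  have hsubst : ∀ x ∈ Ioi (0 : ℝ), ((2 : ℝ) * x ^ ((2 : ℝ) - 1)) •
      (Complex.exp (-b * ↑(x ^ (2 : ℝ))) / (√(x ^ (2 : ℝ)) : ℝ))
        = 2 * Complex.exp (-b * (x : ℂ) ^ 2) := by
    intro x hx
    have hx0 : (x : ℂ) ≠ 0 := by exact_mod_cast (mem_Ioi.1 hx).ne'
    rw [rpow_two, sqrt_sq (mem_Ioi.1 hx).le, show (2 : ℝ) - 1 = 1 by norm_num, rpow_one,
      Complex.real_smul]
    push_cast
    field_simp
  rw [← integral_comp_rpow_Ioi_of_pos two_pos, setIntegral_congr_fun measurableSet_Ioi hsubst,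
    integral_const_mul, integral_gaussian_complex_Ioi hb]
  ring

lemma gaussM_sqrt {c u : ℝ} (hc : 0 < c) (hu : 0 ≤ u) :
    gaussM (1 / (2 * c)) (√u) = √(c / π) * exp (-(c * u)) := by
  have hvar : 2 * π * (1 / (2 * c)) = (c / π)⁻¹ := by field_simp
  rw [gaussM, sq_sqrt hu, hvar, sqrt_inv, div_inv_eq_mul, mul_comm]
  congr 2
  field_simp

lemma cexp_neg_mul_eq_exp_mul_cexp (c ξ u : ℝ) :
    Complex.exp (-(c + 2 * π * ξ * Complex.I) * u)
      = (exp (-(c * u)) : ℂ) * Complex.exp (-(2 : ℂ) * π * Complex.I * ξ * u) := by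
  rw [Complex.ofReal_exp, ← Complex.exp_add]
  push_cast
  ring_nf

lemma gdel_eq {δ : ℝ} (hδ0 : 0 < δ) (hδ1 : δ < 1) (ξ : ℝ) :
    gdel δ ξ = ((δ * √(δ / π) : ℝ) : ℂ) * (π / (δ + 2 * π * ξ * Complex.I)) ^ (1 / 2 : ℂ)
      + (((1 - δ) * √((1 - δ) / π) : ℝ) : ℂ)
        * (π / ((1 - δ : ℝ) + 2 * π * ξ * Complex.I)) ^ (1 / 2 : ℂ) := by
  have hδ1' : 0 < 1 - δ := by linarith
  have hre : ∀ c : ℝ, (c + 2 * π * ξ * Complex.I).re = c := by simp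
  have hsplit : ∀ u ∈ Ioi (0 : ℝ), (hdel δ u : ℂ) * Complex.exp (-(2 : ℂ) * π * Complex.I * ξ * u)
      = ((δ * √(δ / π) : ℝ) : ℂ) * (Complex.exp (-(δ + 2 * π * ξ * Complex.I) * u) / (√u : ℝ))
        + (((1 - δ) * √((1 - δ) / π) : ℝ) : ℂ)
          * (Complex.exp (-((1 - δ : ℝ) + 2 * π * ξ * Complex.I) * u) / (√u : ℝ)) := by
    intro u hu
    rw [hdel, fdel, gaussM_sqrt hδ0 (le_of_lt hu), gaussM_sqrt hδ1' (le_of_lt hu),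
      cexp_neg_mul_eq_exp_mul_cexp, cexp_neg_mul_eq_exp_mul_cexp]
    push_cast
    ring
  rw [gdel, setIntegral_congr_fun measurableSet_Ioi hsplit,
    integral_add ((integrableOn_cexp_neg_mul_div_sqrt (by rw [hre]; exact hδ0)).const_mul _)
      ((integrableOn_cexp_neg_mul_div_sqrt (by rw [hre]; exact hδ1')).const_mul _),
    integral_const_mul, integral_const_mul,
    integral_cexp_neg_mul_div_sqrt (by rw [hre]; exact hδ0),
    integral_cexp_neg_mul_div_sqrt (by rw [hre]; exact hδ1')]

lemma norm_mul_cpow_half {c : ℝ} (hc : 0 < c) (ξ : ℝ) :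
    ‖((c * √(c / π) : ℝ) : ℂ) * (π / (c + 2 * π * ξ * Complex.I)) ^ (1 / 2 : ℂ)‖
      = c * √(c / ‖(c + 2 * π * ξ * Complex.I : ℂ)‖) := by
  rw [norm_mul, Complex.norm_real, norm_of_nonneg (by positivity),
    show (1 / 2 : ℂ) = ((1 / 2 : ℝ) : ℂ) by norm_num, Complex.norm_cpow_real, ← sqrt_eq_rpow,
    norm_div, Complex.norm_real, norm_of_nonneg pi_pos.le, mul_assoc, ← sqrt_mul (by positivity)]
  congr 2
  field_simp

lemma le_one_sub_add_of_pow_four_mul_le {x t : ℝ} (ht : 0 ≤ t) (hx : x ^ 4 * (1 + t) ≤ 1) :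
    x ≤ 1 - t / 4 + 3 * t ^ 2 / 16 := by
  have hq : 0 < 1 - t / 4 + 3 * t ^ 2 / 16 := by nlinarith [sq_nonneg (t - 2 / 3)]
  -- `p = 1 - t/2 + 3t²/8` splits `(1 + t) q⁴ ≥ 1` into `p ≤ q²` and `(1 + t) p² ≥ 1`.
  have hp : 0 < 1 - t / 2 + 3 * t ^ 2 / 8 := by nlinarith [sq_nonneg (t - 2 / 3)]
  have hqp : 1 - t / 2 + 3 * t ^ 2 / 8 ≤ (1 - t / 4 + 3 * t ^ 2 / 16) ^ 2 := by
    nlinarith [sq_nonneg (t * (4 - 3 * t))]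
  have hp2 : 1 ≤ (1 - t / 2 + 3 * t ^ 2 / 8) ^ 2 * (1 + t) := by
    nlinarith [mul_nonneg (pow_nonneg ht 3) (sq_nonneg (t - 5 / 6)), pow_nonneg ht 3]
  have hq4 : 1 ≤ (1 - t / 4 + 3 * t ^ 2 / 16) ^ 4 * (1 + t) := by
    calc 1 ≤ (1 - t / 2 + 3 * t ^ 2 / 8) ^ 2 * (1 + t) := hp2
      _ ≤ ((1 - t / 4 + 3 * t ^ 2 / 16) ^ 2) ^ 2 * (1 + t) := by gcongr
      _ = (1 - t / 4 + 3 * t ^ 2 / 16) ^ 4 * (1 + t) := by ring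
  refine le_of_pow_le_pow_left₀ four_ne_zero hq.le
    (le_of_mul_le_mul_right ?_ (by linarith : 0 < 1 + t))
  linarith

lemma norm_gdel_le {δ : ℝ} (hδ0 : 0 < δ) (hδ1 : δ < 1) (ξ : ℝ) :
    ‖gdel δ ξ‖ ≤ 1 - δ * ((2 * π * ξ / δ) ^ 2 / 4 - 3 * ((2 * π * ξ / δ) ^ 2) ^ 2 / 16) := by
  have hδ1' : 0 < 1 - δ := by linarith
  set t := (2 * π * ξ / δ) ^ 2 with ht
  have hsq_norm : ‖((δ : ℂ) + 2 * π * ξ * Complex.I)‖ ^ 2 = δ ^ 2 + (2 * π * ξ) ^ 2 := by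
    rw [Complex.sq_norm, show (δ : ℂ) + 2 * π * ξ * Complex.I
      = δ + ((2 * π * ξ : ℝ) : ℂ) * Complex.I by push_cast; ring, Complex.normSq_add_mul_I]
  have hδ_term : √(δ / ‖((δ : ℂ) + 2 * π * ξ * Complex.I)‖) ≤ 1 - t / 4 + 3 * t ^ 2 / 16 := by
    refine le_one_sub_add_of_pow_four_mul_le (sq_nonneg _) (le_of_eq ?_)
    rw [show ∀ x : ℝ, x ^ 4 = (x ^ 2) ^ 2 by intro x; ring, sq_sqrt (by positivity), div_pow,
      hsq_norm, ht]
    field_simp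
  have hcompl_term : √((1 - δ) / ‖(((1 - δ : ℝ) : ℂ) + 2 * π * ξ * Complex.I)‖) ≤ 1 := by
    refine sqrt_le_one.mpr (div_le_one_of_le₀ ?_ (norm_nonneg _))
    simpa using Complex.re_le_norm (((1 - δ : ℝ) : ℂ) + 2 * π * ξ * Complex.I)
  calc ‖gdel δ ξ‖
      ≤ δ * √(δ / ‖((δ : ℂ) + 2 * π * ξ * Complex.I)‖)
        + (1 - δ) * √((1 - δ) / ‖(((1 - δ : ℝ) : ℂ) + 2 * π * ξ * Complex.I)‖) := by
        rw [gdel_eq hδ0 hδ1, ← norm_mul_cpow_half hδ0, ← norm_mul_cpow_half hδ1']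
        exact norm_add_le _ _
    _ ≤ δ * (1 - t / 4 + 3 * t ^ 2 / 16) + (1 - δ) * 1 := by gcongr
    _ = 1 - δ * (t / 4 - 3 * t ^ 2 / 16) := by ring

lemma monotoneOn_div_four_sub_sq :
    MonotoneOn (fun t : ℝ => t / 4 - 3 * t ^ 2 / 16) (Icc 0 (2 / 3)) := by
  intro a ha b hb hab
  nlinarith [ha.1, hb.2]

lemma sq_two_pi_mul_div_mem_Icc {δ a ξ : ℝ} (hδ : 0 < δ) (ha : 0 ≤ a)
    (hlo : δ * a / (4 * π) < |ξ|) (hhi : |ξ| < δ / (4 * π)) :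
    (2 * π * ξ / δ) ^ 2 ∈ Icc ((a / 2) ^ 2) (1 / 4) := by
  have habs : (2 * π * ξ / δ) ^ 2 = (2 * π * |ξ| / δ) ^ 2 := by
    rw [← sq_abs (2 * π * ξ / δ), abs_div, abs_mul, abs_of_pos (by positivity : (0 : ℝ) < 2 * π),
      abs_of_pos hδ]
  have hσ_lo : a / 2 < 2 * π * |ξ| / δ := by
    rw [div_lt_iff₀ (by positivity)] at hlo
    rw [lt_div_iff₀ hδ]
    linarith
  have hσ_hi : 2 * π * |ξ| / δ < 1 / 2 := by
    rw [lt_div_iff₀ (by positivity)] at hhi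
    rw [div_lt_iff₀ hδ]
    linarith
  rw [habs]
  exact ⟨pow_le_pow_left₀ (by positivity) hσ_lo.le 2,
    by nlinarith [show 0 ≤ 2 * π * |ξ| / δ by positivity]⟩

lemma tendsto_rpow_div_rpow_nhdsGT_zero {p q : ℝ} (hpq : p < q) :
    Tendsto (fun x : ℝ => x ^ q / x ^ p) (𝓝[>] 0) (𝓝 0) := by
  refine ((tendsto_id.mono_left nhdsWithin_le_nhds).rpow_const_nhds_zero (sub_pos.2 hpq)).congr' ?_
  filter_upwards [self_mem_nhdsWithin] with x (hx : 0 < x)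
  rw [id, rpow_sub hx]

lemma rpow_one_add_natCast_mul {x : ℝ} (hx : 0 < x) (y : ℝ) (n : ℕ) :
    x ^ (1 + n * y) = x * (x ^ y) ^ n := by
  rw [rpow_add hx, rpow_one, mul_comm (n : ℝ), rpow_mul_natCast hx.le]

/-- Decay bound on `g_δ` in the intermediate region `δ^{1+β}/(4π) < |ξ| < δ/(4π)`. -/
theorem gdel_decay_intermediate (β : ℝ) (hβ : 0 < β) :
    ∃ ρ₂ : ℝ → ℝ,
      Tendsto (fun δ => ρ₂ δ / δ ^ (1 + 2 * β)) (nhdsWithin 0 (Ioi 0)) (nhds 0) ∧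
      ∀ δ ∈ Ioo (0 : ℝ) (1 / 2), ∀ ξ : ℝ,
        δ ^ (1 + β) / (4 * π) < |ξ| → |ξ| < δ / (4 * π) →
          ‖gdel δ ξ‖ ≤ 1 - δ ^ (1 + 2 * β) / 16 + ρ₂ δ := by
  refine ⟨fun δ => 3 / 256 * δ ^ (1 + 4 * β), ?_, ?_⟩
  · simpa only [mul_div_assoc, mul_zero] using
      (tendsto_rpow_div_rpow_nhdsGT_zero (by linarith : 1 + 2 * β < 1 + 4 * β)).const_mul
        (3 / 256 : ℝ)
  · rintro δ ⟨hδ0, hδ⟩ ξ hlo hhi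
    rw [rpow_add hδ0, rpow_one] at hlo
    obtain ⟨ht_lo, ht_hi⟩ := sq_two_pi_mul_div_mem_Icc hδ0 (by positivity) hlo hhi
    have h2 : δ ^ (1 + 2 * β) = δ * (δ ^ β) ^ 2 := by
      exact_mod_cast rpow_one_add_natCast_mul hδ0 β 2
    have h4 : δ ^ (1 + 4 * β) = δ * (δ ^ β) ^ 4 := by
      exact_mod_cast rpow_one_add_natCast_mul hδ0 β 4
    calc ‖gdel δ ξ‖
        ≤ 1 - δ * ((2 * π * ξ / δ) ^ 2 / 4 - 3 * ((2 * π * ξ / δ) ^ 2) ^ 2 / 16) :=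
          norm_gdel_le hδ0 (by linarith) ξ
      _ ≤ 1 - δ * ((δ ^ β / 2) ^ 2 / 4 - 3 * ((δ ^ β / 2) ^ 2) ^ 2 / 16) := by
          gcongr 1 - δ * ?_
          exact monotoneOn_div_four_sub_sq ⟨sq_nonneg _, by linarith⟩ ⟨sq_nonneg _, by linarith⟩
            ht_lo
      _ = 1 - δ ^ (1 + 2 * β) / 16 + 3 / 256 * δ ^ (1 + 4 * β) := by
          rw [h2, h4]
          ring

end
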